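/- arXiv:2203.07715 — 2 statements merged into one kernel-verified Lean document; each statement's English description precedes it below -/
import Mathlib

section
/- Let G be a locally compact second countable group acting measurably on a standard measure space (X, μ), let X₁ ⊆ X be a Borel cross section with injectivity neighborhood U ∋ e, and suppose (3.1): ∫_X 1_{U·X₁}(x) D(γ(x)⁻¹, x) dμ(x) = λ_G(U) μ₁(X₁') for appropriate Borel sets X₁' ⊆ X₁, where λ_G is Haar measure and μ₁ the cross section measure. If Z_n ⊆ X₀ ⊆ X₁ are Borel sets with 0 < μ₁(X₀) < ∞ and μ(U·Z_n) → 0, and the map E ↦ ∫ 1_E 1_{U·X₀} D(γ(x)⁻¹,x) dμ(x) is absolutely continuous with respect to μ, then μ₁(Z_n) → 0. -/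
open MeasureTheory Filter

open scoped ENNReal Pointwise

/-- via the cross section measure identity (3.1), if
`μ(U·Z_n) → 0` and `E ↦ ∫ 1_E 1_{U·X₀} D(γ(x)⁻¹,x) dμ(x)` is ε-δ absolutely
continuous with respect to `μ`, then `μ₁(Z_n) → 0`. -/
theorem stmt9 {G X : Type*} [Group G] [MulAction G X]
    [MeasurableSpace G] [MeasurableSpace X]
    (lamG : Measure G) (μ μ₁ : Measure X)
    (U : Set G) (hU0 : 0 < lamG U) (hUfin : lamG U ≠ ⊤)
    (X₁ X₀ : Set X) (hX₀1 : X₀ ⊆ X₁) (hX₁m : MeasurableSet X₁)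
    (hX₀m : MeasurableSet X₀)
    (D : G → X → ℝ≥0∞) (γ : X → G)
    (h31 : ∀ S : Set X, MeasurableSet S → S ⊆ X₁ →
      ∫⁻ x, (U • S).indicator 1 x * D (γ x)⁻¹ x ∂μ = lamG U * μ₁ S)
    (hμ₁pos : 0 < μ₁ X₀) (hμ₁fin : μ₁ X₀ < ⊤)
    (Z : ℕ → Set X) (hZm : ∀ n, MeasurableSet (Z n)) (hZ0 : ∀ n, Z n ⊆ X₀)
    (hZ : Tendsto (fun n => μ (U • Z n)) atTop (nhds 0))
    (hac : ∀ ε : ℝ≥0∞, 0 < ε → ∃ δ : ℝ≥0∞, 0 < δ ∧ ∀ E : Set X, μ E < δ →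
      ∫⁻ x in E, (U • X₀).indicator 1 x * D (γ x)⁻¹ x ∂μ < ε) :
    Tendsto (fun n => μ₁ (Z n)) atTop (nhds 0) := by
  rw [ENNReal.tendsto_atTop_zero]
  intro ε hε
  obtain ⟨δ, hδ, hδE⟩ := hac (lamG U * ε) (ENNReal.mul_pos hU0.ne' hε.ne')
  obtain ⟨N, hN⟩ := eventually_atTop.mp (hZ.eventually (gt_mem_nhds hδ))
  refine ⟨N, fun n hn => ?_⟩
  have hkey : lamG U * μ₁ (Z n) < lamG U * ε := by
    rw [← h31 (Z n) (hZm n) ((hZ0 n).trans hX₀1)]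
    calc ∫⁻ x, (U • Z n).indicator 1 x * D (γ x)⁻¹ x ∂μ
        = ∫⁻ x, (U • Z n).indicator
            (fun x => (U • X₀).indicator 1 x * D (γ x)⁻¹ x) x ∂μ := by
          refine lintegral_congr fun x => ?_
          by_cases hx : x ∈ U • Z n
          · have hx' : x ∈ U • X₀ := Set.smul_subset_smul_left (hZ0 n) hx
            simp [Set.indicator_of_mem, hx, hx']
          · simp [Set.indicator_of_notMem, hx]
      _ ≤ ∫⁻ x in U • Z n, (U • X₀).indicator 1 x * D (γ x)⁻¹ x ∂μ :=
          lintegral_indicator_le _ _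
      _ < lamG U * ε := hδE _ (hN n hn)
  exact le_of_lt ((ENNReal.mul_lt_mul_iff_right hU0.ne' hUfin).mp hkey)
end

section
/- Let (f_n) be a sequence in L^∞(X₀, μ₁) on a finite measure space, and let F_n ∈ L^∞(X, μ) be defined by F_n(x) = f_n(φ(π(x))) for measurable maps π : X → X₁ and a family of partial isomorphisms φ sending π(x) into X₀. If there exist λ_n ∈ ℂ with F_n − λ_n → 0 in measure on (X, μ), and the sets Z_n = {ω ∈ X₀ : |f_n(ω) − λ_n| > ε} satisfy U·Z_n ⊆ Y_n := {x ∈ X : |F_n(x) − λ_n| > ε} with μ(Y_n) → 0 and with μ₁(Z_n) controlled by μ(U·Z_n) as in the cross section measure formula, then f_n − λ_n → 0 in measure on (X₀, μ₁), i.e., (f_n) is a trivial sequence. -/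
open MeasureTheory Filter

open scoped Pointwise

/-- triviality of `(f_n)` on the cross section from triviality of
the lifted sequence `F_n(x) = f_n(φ(π(x)))` on `(X, μ)`, given the inclusion
`U·Z_n ⊆ Y_n` and the cross-section control of `μ₁(Z_n)` by `μ(U·Z_n)`. -/
theorem stmt12 {G X : Type*} [Group G] [MulAction G X] [MeasurableSpace X]
    (μ μ₁ : Measure X) [IsFiniteMeasure μ₁]
    (X₀ X₁ : Set X) (U : Set G)
    (f : ℕ → X → ℂ) (π : X → X) (φ : X → X) (hφ : ∀ x, φ (π x) ∈ X₀)
    (F : ℕ → X → ℂ) (hF : ∀ n x, F n x = f n (φ (π x)))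
    (lam : ℕ → ℂ)
    (hFconv : ∀ δ : ℝ, 0 < δ →
      Tendsto (fun n => μ {x | δ < ‖F n x - lam n‖}) atTop (nhds 0))
    (hsub : ∀ n, ∀ ε : ℝ, 0 < ε →
      U • {ω ∈ X₀ | ε < ‖f n ω - lam n‖} ⊆ {x | ε < ‖F n x - lam n‖})
    (hcontrol : ∀ Z : ℕ → Set X, (∀ n, Z n ⊆ X₀) →
      Tendsto (fun n => μ (U • Z n)) atTop (nhds 0) →
      Tendsto (fun n => μ₁ (Z n)) atTop (nhds 0)) :
    ∀ δ : ℝ, 0 < δ →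
      Tendsto (fun n => μ₁ {ω ∈ X₀ | δ < ‖f n ω - lam n‖}) atTop (nhds 0) := by
  intro δ hδ
  apply hcontrol (fun n => {ω ∈ X₀ | δ < ‖f n ω - lam n‖}) (fun n => Set.sep_subset _ _)
  have h := hFconv δ hδ
  exact tendsto_of_tendsto_of_tendsto_of_le_of_le tendsto_const_nhds h
    (fun n => zero_le) (fun n => measure_mono (hsub n δ hδ))
end
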